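/- arXiv:1710.07926 — 2 statements merged into one kernel-verified Lean document; each statement's English description precedes it below -/
import Mathlib

section
/- Let 0 < α < 1, C > 0, p ≥ 1 an integer, and n_1, …, n_p positive integers with N = ∑_i n_i. Let (v_{i,k})_{i≤p, k≤n_i} be vectors in a Hilbert space H with ‖v_{i,k}‖_{L²} ≤ C·k^{-α} (i.e. √(E‖v_{i,k}‖²) ≤ C k^{-α}). Then E[‖(1/N)∑_{i=1}^{p}∑_{k=1}^{n_i} v_{i,k}‖²] ≤ C²(1−α)^{-2}·p^{2α}·N^{-2α}. -/
/-!
By Minkowski's inequality in `L²`, the `L²`-norm of the `i`-th block `∑_{k ≤ n_i} v_{i,k}` is at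
most `C ∑_{k ≤ n_i} k^(-α) ≤ C (1 - α)⁻¹ n_i^(1 - α)`, the last step comparing each `k^(-α)` with
an increment of the concave function `t ↦ t^(1 - α)`. Minkowski again, and Hölder's inequality
`∑_i n_i^(1 - α) ≤ p^α N^(1 - α)`, bound the `L²`-norm of the whole sum by
`C (1 - α)⁻¹ p^α N^(1 - α)`; dividing by `N` and squaring gives the claim.
-/

open Finset MeasureTheory

namespace Real

theorem rpow_le_rpow_add_mul_rpow_sub_one_mul_sub {x y γ : ℝ} (hx : 0 ≤ x) (hy : 0 < y)
    (hγ0 : 0 ≤ γ) (hγ1 : γ ≤ 1) : x ^ γ ≤ y ^ γ + γ * y ^ (γ - 1) * (x - y) := by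
  have hbern := rpow_one_add_le_one_add_mul_self (s := x / y - 1) (by
    linarith [div_nonneg hx hy.le]) hγ0 hγ1
  rw [add_sub_cancel, div_rpow hx hy.le, div_le_iff₀ (rpow_pos_of_pos hy γ)] at hbern
  calc x ^ γ ≤ (1 + γ * (x / y - 1)) * y ^ γ := hbern
    _ = y ^ γ + γ * (y ^ γ / y) * (x - y) := by field_simp
    _ = y ^ γ + γ * y ^ (γ - 1) * (x - y) := by rw [rpow_sub_one hy.ne']

theorem sum_Icc_rpow_neg_le {α : ℝ} (hα0 : 0 ≤ α) (hα1 : α < 1) (m : ℕ) :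
    ∑ k ∈ Icc 1 m, (k : ℝ) ^ (-α) ≤ (1 - α)⁻¹ * (m : ℝ) ^ (1 - α) := by
  have hγ : 0 < 1 - α := by linarith
  induction m with
  | zero => simp [zero_rpow hγ.ne']
  | succ m ih =>
    have hstep : ((m + 1 : ℕ) : ℝ) ^ (-α)
        ≤ (1 - α)⁻¹ * (((m + 1 : ℕ) : ℝ) ^ (1 - α) - (m : ℝ) ^ (1 - α)) := by
      have htangent := rpow_le_rpow_add_mul_rpow_sub_one_mul_sub m.cast_nonneg
        (Nat.cast_pos.mpr m.succ_pos) hγ.le (by linarith)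
      rw [show 1 - α - 1 = -α by ring] at htangent
      push_cast at htangent ⊢
      rw [le_inv_mul_iff₀ hγ]
      linarith
    rw [sum_Icc_succ_top (by omega)]
    linarith [mul_sub (1 - α)⁻¹ (((m + 1 : ℕ) : ℝ) ^ (1 - α)) ((m : ℝ) ^ (1 - α))]

theorem sum_rpow_le_card_rpow_mul_rpow_sum {ι : Type*} (s : Finset ι) {f : ι → ℝ}
    (hf : ∀ i ∈ s, 0 ≤ f i) {γ : ℝ} (hγ0 : 0 < γ) (hγ1 : γ ≤ 1) :
    ∑ i ∈ s, f i ^ γ ≤ (#s : ℝ) ^ (1 - γ) * (∑ i ∈ s, f i) ^ γ := by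
  have hpow := rpow_sum_le_const_mul_sum_rpow_of_nonneg (s := s) (f := fun i => f i ^ γ)
    (one_le_inv₀ hγ0 |>.mpr hγ1) fun i hi => rpow_nonneg (hf i hi) γ
  rw [sum_congr rfl fun i hi => rpow_rpow_inv (hf i hi) hγ0.ne'] at hpow
  have hsum_nonneg : 0 ≤ ∑ i ∈ s, f i ^ γ := sum_nonneg fun i hi => rpow_nonneg (hf i hi) γ
  calc ∑ i ∈ s, f i ^ γ = ((∑ i ∈ s, f i ^ γ) ^ γ⁻¹) ^ γ := (rpow_inv_rpow hsum_nonneg hγ0.ne').symm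
    _ ≤ ((#s : ℝ) ^ (γ⁻¹ - 1) * ∑ i ∈ s, f i) ^ γ := by gcongr
    _ = (#s : ℝ) ^ (1 - γ) * (∑ i ∈ s, f i) ^ γ := by
      rw [mul_rpow (by positivity) (sum_nonneg hf), ← rpow_mul (by positivity)]
      congr 2
      field_simp

end Real

namespace MeasureTheory

variable {Ω H : Type*} {m0 : MeasurableSpace Ω} {μ : Measure Ω} [NormedAddCommGroup H]

theorem MemLp.sqrt_integral_norm_sq {f : Ω → H} (hf : MemLp f 2 μ) :
    √(∫ ω, ‖f ω‖ ^ 2 ∂μ) = (eLpNorm f 2 μ).toReal := by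
  rw [hf.eLpNorm_eq_integral_rpow_norm two_ne_zero ENNReal.ofNat_ne_top,
    ENNReal.toReal_ofReal (by positivity), Real.sqrt_eq_rpow]
  norm_num

theorem sqrt_integral_norm_sum_sq_le {ι : Type*} (s : Finset ι) {f : ι → Ω → H}
    (hf : ∀ i ∈ s, MemLp (f i) 2 μ) :
    √(∫ ω, ‖∑ i ∈ s, f i ω‖ ^ 2 ∂μ) ≤ ∑ i ∈ s, √(∫ ω, ‖f i ω‖ ^ 2 ∂μ) := by
  have hsum : MemLp (∑ i ∈ s, f i) 2 μ := memLp_finsetSum' s hf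
  simp only [← Finset.sum_apply, hsum.sqrt_integral_norm_sq]
  rw [sum_congr rfl fun i hi => (hf i hi).sqrt_integral_norm_sq,
    ← ENNReal.toReal_sum fun i hi => (hf i hi).eLpNorm_ne_top]
  exact ENNReal.toReal_mono (ENNReal.sum_ne_top.mpr fun i hi => (hf i hi).eLpNorm_ne_top)
    (eLpNorm_sum_le (fun i hi => (hf i hi).aestronglyMeasurable) one_le_two)

theorem sqrt_integral_norm_sum_Icc_sq_le {v : ℕ → Ω → H} {α C : ℝ} (hα0 : 0 ≤ α) (hα1 : α < 1)
    (hC : 0 ≤ C) (m : ℕ) (hv : ∀ k, MemLp (v k) 2 μ)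
    (hbound : ∀ k ∈ Icc 1 m, √(∫ ω, ‖v k ω‖ ^ 2 ∂μ) ≤ C * (k : ℝ) ^ (-α)) :
    √(∫ ω, ‖∑ k ∈ Icc 1 m, v k ω‖ ^ 2 ∂μ) ≤ C * (1 - α)⁻¹ * (m : ℝ) ^ (1 - α) :=
  calc √(∫ ω, ‖∑ k ∈ Icc 1 m, v k ω‖ ^ 2 ∂μ)
      ≤ ∑ k ∈ Icc 1 m, √(∫ ω, ‖v k ω‖ ^ 2 ∂μ) :=
        sqrt_integral_norm_sum_sq_le _ fun k _ => hv k
    _ ≤ ∑ k ∈ Icc 1 m, C * (k : ℝ) ^ (-α) := sum_le_sum hbound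
    _ ≤ C * ((1 - α)⁻¹ * (m : ℝ) ^ (1 - α)) := by
      rw [← mul_sum]
      exact mul_le_mul_of_nonneg_left (Real.sum_Icc_rpow_neg_le hα0 hα1 m) hC
    _ = C * (1 - α)⁻¹ * (m : ℝ) ^ (1 - α) := (mul_assoc _ _ _).symm

end MeasureTheory

theorem stmt_10_general {Ω : Type*} {m0 : MeasurableSpace Ω} (μ : Measure Ω)
    {H : Type*} [NormedAddCommGroup H] [InnerProductSpace ℝ H]
    (α C : ℝ) (hα0 : 0 < α) (hα1 : α < 1) (hC : 0 < C)
    (p : ℕ) (n : Fin p → ℕ)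
    (v : Fin p → ℕ → Ω → H)
    (hL2 : ∀ i k, MemLp (v i k) 2 μ)
    (hbound : ∀ i, ∀ k ∈ Finset.Icc 1 (n i),
      Real.sqrt (∫ ω, ‖v i k ω‖ ^ 2 ∂μ) ≤ C * (k : ℝ) ^ (-α)) :
    ∫ ω, ‖((∑ i, (n i : ℝ))⁻¹) • ∑ i, ∑ k ∈ Finset.Icc 1 (n i), v i k ω‖ ^ 2 ∂μ
      ≤ C ^ 2 * ((1 - α)⁻¹) ^ 2 * (p : ℝ) ^ (2 * α) * (∑ i, (n i : ℝ)) ^ (-(2 * α)) := by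
  set N : ℝ := ∑ i, (n i : ℝ)
  have hN : 0 ≤ N := sum_nonneg fun i _ => (n i).cast_nonneg
  have hsqrt : √(∫ ω, ‖∑ i, ∑ k ∈ Icc 1 (n i), v i k ω‖ ^ 2 ∂μ)
      ≤ C * (1 - α)⁻¹ * ((p : ℝ) ^ α * N ^ (1 - α)) :=
    calc _ ≤ ∑ i, √(∫ ω, ‖∑ k ∈ Icc 1 (n i), v i k ω‖ ^ 2 ∂μ) :=
          sqrt_integral_norm_sum_sq_le _ fun i _ => memLp_finsetSum _ fun k _ => hL2 i k
      _ ≤ ∑ i, C * (1 - α)⁻¹ * (n i : ℝ) ^ (1 - α) := sum_le_sum fun i _ =>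
          sqrt_integral_norm_sum_Icc_sq_le hα0.le hα1 hC.le (n i) (hL2 i) (hbound i)
      _ ≤ C * (1 - α)⁻¹ * ((p : ℝ) ^ α * N ^ (1 - α)) := by
        rw [← mul_sum]
        gcongr
        simpa using Real.sum_rpow_le_card_rpow_mul_rpow_sum univ (fun i _ => (n i).cast_nonneg)
          (γ := 1 - α) (by linarith) (by linarith)
  -- `rpow_add'` rather than `rpow_add`: this also holds at `N = 0`, where `0⁻¹ = 0 ^ (-α) = 0`.
  have hN_rpow : N⁻¹ * N ^ (1 - α) = N ^ (-α) := by
    rw [← Real.rpow_neg_one, ← Real.rpow_add' hN (by linarith)]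
    ring_nf
  calc ∫ ω, ‖N⁻¹ • ∑ i, ∑ k ∈ Icc 1 (n i), v i k ω‖ ^ 2 ∂μ
      = N⁻¹ ^ 2 * ∫ ω, ‖∑ i, ∑ k ∈ Icc 1 (n i), v i k ω‖ ^ 2 ∂μ := by
        simp only [norm_smul, mul_pow, Real.norm_eq_abs, sq_abs, integral_const_mul]
    _ ≤ N⁻¹ ^ 2 * (C * (1 - α)⁻¹ * ((p : ℝ) ^ α * N ^ (1 - α))) ^ 2 := by
        gcongr
        exact (Real.sqrt_le_iff.mp hsqrt).2
    _ = C ^ 2 * ((1 - α)⁻¹) ^ 2 * ((p : ℝ) ^ α) ^ 2 * (N⁻¹ * N ^ (1 - α)) ^ 2 := by ring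
    _ = C ^ 2 * ((1 - α)⁻¹) ^ 2 * (p : ℝ) ^ (2 * α) * N ^ (-(2 * α)) := by
        rw [hN_rpow, ← Real.rpow_mul_natCast p.cast_nonneg, ← Real.rpow_mul_natCast hN]
        ring_nf

theorem stmt_10 {Ω : Type*} {m0 : MeasurableSpace Ω} (μ : Measure Ω) [IsProbabilityMeasure μ]
    {H : Type*} [NormedAddCommGroup H] [InnerProductSpace ℝ H] [CompleteSpace H]
    [SecondCountableTopology H]
    (α C : ℝ) (hα0 : 0 < α) (hα1 : α < 1) (hC : 0 < C)
    (p : ℕ) (hp : 1 ≤ p) (n : Fin p → ℕ) (hn : ∀ i, 1 ≤ n i)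
    (v : Fin p → ℕ → Ω → H)
    (hL2 : ∀ i k, MemLp (v i k) 2 μ)
    (hbound : ∀ i, ∀ k ∈ Finset.Icc 1 (n i),
      Real.sqrt (∫ ω, ‖v i k ω‖ ^ 2 ∂μ) ≤ C * (k : ℝ) ^ (-α)) :
    ∫ ω, ‖((∑ i, (n i : ℝ))⁻¹) • ∑ i, ∑ k ∈ Finset.Icc 1 (n i), v i k ω‖ ^ 2 ∂μ
      ≤ C ^ 2 * ((1 - α)⁻¹) ^ 2 * (p : ℝ) ^ (2 * α) * (∑ i, (n i : ℝ)) ^ (-(2 * α)) :=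
  stmt_10_general (m0 := m0) μ α C hα0 hα1 hC p n v hL2 hbound
end

section
/- Let L₁ > 0, C₁ > 0, 0 < α < 1, p ≥ 1 an integer, n_1, …, n_p positive integers with N = ∑_i n_i. Let (ξ_{i,k+1}) be H-valued square-integrable random variables such that (a) for each i, (ξ_{i,k}) is a martingale difference sequence with respect to a filtration (F_{i,k}), (b) the families (ξ_{i,·}) for distinct i are independent, and (c) E[‖ξ_{i,k+1}‖²] ≤ L₁(1 + C₁ k^{-α}) for all i, k. Then E[‖(1/N)∑_{i=1}^{p}∑_{k=1}^{n_i} ξ_{i,k+1}‖²] ≤ L₁/N + L₁C₁(1−α)^{-1}·p^{α}·N^{-(1+α)}. -/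
open MeasureTheory ProbabilityTheory Finset

open scoped RealInnerProductSpace

/-! Within one machine the increments are orthogonal in `L²(Ω; H)`: an earlier increment is
measurable for the σ-algebra on which the later one has zero conditional expectation.
Across machines they are orthogonal because independence turns that conditional expectation into
the (zero) mean. Hence the second moment of the double sum is the sum of the second moments, which
are bounded by `L₁ N + L₁ C₁ ∑ᵢ ∑_{k ≤ nᵢ} k^{-α}`. The inner sums are at most
`(1 - α)⁻¹ nᵢ^{1-α}` (an integral comparison, proved by induction from Bernoulli's inequality),
and concavity of `x ↦ x^{1-α}` gives `∑ᵢ nᵢ^{1-α} ≤ p^α N^{1-α}`. -/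

lemma rpow_add_one_sub_mul_rpow_neg_le {α : ℝ} (hα0 : 0 ≤ α) (hα1 : α ≤ 1) (n : ℕ) :
    (n : ℝ) ^ (1 - α) + (1 - α) * ((n : ℝ) + 1) ^ (-α) ≤ ((n : ℝ) + 1) ^ (1 - α) := by
  set t : ℝ := (n : ℝ) + 1
  have ht : 0 < t := by positivity
  have hbern := rpow_one_add_le_one_add_mul_self (s := -t⁻¹)
    (by simpa using inv_le_one_of_one_le₀ (by simp [t] : (1 : ℝ) ≤ t)) (p := 1 - α)
    (by linarith) (by linarith)
  have hnt : 1 + -t⁻¹ = n / t := by field_simp; simp [t]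
  rw [hnt, Real.div_rpow (Nat.cast_nonneg n) ht.le, div_le_iff₀ (by positivity)] at hbern
  have hsplit : t ^ (1 - α) = t * t ^ (-α) := by
    rw [sub_eq_add_neg, Real.rpow_add ht, Real.rpow_one]
  rw [hsplit] at hbern ⊢
  field_simp at hbern
  nlinarith

lemma sum_Icc_rpow_neg_le {α : ℝ} (hα0 : 0 ≤ α) (hα1 : α < 1) (n : ℕ) :
    ∑ k ∈ Icc 1 n, (k : ℝ) ^ (-α) ≤ (1 - α)⁻¹ * (n : ℝ) ^ (1 - α) := by
  have h1α : 0 < 1 - α := by linarith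
  induction n with
  | zero => simp [Real.zero_rpow h1α.ne']
  | succ n ih =>
    have key := rpow_add_one_sub_mul_rpow_neg_le hα0 hα1.le n
    rw [sum_Icc_succ_top (by omega), Nat.cast_succ]
    calc ∑ k ∈ Icc 1 n, (k : ℝ) ^ (-α) + ((n : ℝ) + 1) ^ (-α)
        ≤ (1 - α)⁻¹ * (n : ℝ) ^ (1 - α) + ((n : ℝ) + 1) ^ (-α) := by gcongr
      _ ≤ (1 - α)⁻¹ * ((n : ℝ) + 1) ^ (1 - α) := by
        rw [le_inv_mul_iff₀ h1α, mul_add, mul_inv_cancel_left₀ h1α.ne']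
        linarith

lemma sum_rpow_le_card_rpow_mul_rpow_sum {ι : Type*} (s : Finset ι) {f : ι → ℝ}
    (hf : ∀ i ∈ s, 0 ≤ f i) {r : ℝ} (hr0 : 0 ≤ r) (hr1 : r ≤ 1) :
    ∑ i ∈ s, f i ^ r ≤ (#s : ℝ) ^ (1 - r) * (∑ i ∈ s, f i) ^ r := by
  rcases s.eq_empty_or_nonempty with rfl | hs
  · simp only [sum_empty, card_empty, Nat.cast_zero]
    positivity
  have hcard : (0 : ℝ) < #s := by exact_mod_cast hs.card_pos
  have hjensen := (Real.concaveOn_rpow hr0 hr1).le_map_sum (t := s) (w := fun _ => (#s : ℝ)⁻¹)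
    (p := f) (fun _ _ => by positivity) (by simp [hcard.ne']) (fun i hi => hf i hi)
  simp only [smul_eq_mul, ← mul_sum] at hjensen
  rw [Real.mul_rpow (by positivity) (sum_nonneg hf), Real.inv_rpow hcard.le,
    inv_mul_le_iff₀ hcard, ← mul_assoc] at hjensen
  rwa [Real.rpow_sub hcard, Real.rpow_one, div_eq_mul_inv]

lemma sum_sum_Icc_rpow_neg_le {ι : Type*} (s : Finset ι) (n : ι → ℕ) {α : ℝ} (hα0 : 0 ≤ α)
    (hα1 : α < 1) :
    ∑ i ∈ s, ∑ k ∈ Icc 1 (n i), (k : ℝ) ^ (-α)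
      ≤ (1 - α)⁻¹ * (#s : ℝ) ^ α * (∑ i ∈ s, (n i : ℝ)) ^ (1 - α) := by
  calc ∑ i ∈ s, ∑ k ∈ Icc 1 (n i), (k : ℝ) ^ (-α)
      ≤ ∑ i ∈ s, (1 - α)⁻¹ * (n i : ℝ) ^ (1 - α) :=
        sum_le_sum fun i _ => sum_Icc_rpow_neg_le hα0 hα1 (n i)
    _ ≤ (1 - α)⁻¹ * ((#s : ℝ) ^ α * (∑ i ∈ s, (n i : ℝ)) ^ (1 - α)) := by
        rw [← mul_sum]
        gcongr
        simpa using sum_rpow_le_card_rpow_mul_rpow_sum s (fun i _ => Nat.cast_nonneg (n i))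
          (r := 1 - α) (by linarith) (by linarith)
    _ = _ := by ring

section Orthogonality

variable {Ω : Type*} {m0 : MeasurableSpace Ω} {μ : Measure Ω}
  {H : Type*} [NormedAddCommGroup H] [InnerProductSpace ℝ H]

lemma MeasureTheory.MemLp.inner_toLp_ae_eq {X Y : Ω → H} (hX : MemLp X 2 μ) (hY : MemLp Y 2 μ) :
    (fun ω => ⟪hX.toLp X ω, hY.toLp Y ω⟫) =ᵐ[μ] fun ω => ⟪X ω, Y ω⟫ := by
  filter_upwards [hX.coeFn_toLp, hY.coeFn_toLp] with ω hXω hYω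
  rw [hXω, hYω]

lemma MeasureTheory.MemLp.integrable_inner {X Y : Ω → H} (hX : MemLp X 2 μ) (hY : MemLp Y 2 μ) :
    Integrable (fun ω => ⟪X ω, Y ω⟫) μ :=
  (L2.integrable_inner (hX.toLp X) (hY.toLp Y)).congr (hX.inner_toLp_ae_eq hY)

lemma integral_norm_sum_sq_of_orthogonal {ι : Type*} (s : Finset ι) {f : ι → Ω → H}
    (hf : ∀ i ∈ s, MemLp (f i) 2 μ)
    (horth : ∀ i ∈ s, ∀ j ∈ s, i ≠ j → ∫ ω, ⟪f i ω, f j ω⟫ ∂μ = 0) :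
    ∫ ω, ‖∑ i ∈ s, f i ω‖ ^ 2 ∂μ = ∑ i ∈ s, ∫ ω, ‖f i ω‖ ^ 2 ∂μ := by
  have hexpand : ∀ ω, ‖∑ i ∈ s, f i ω‖ ^ 2 = ∑ i ∈ s, ∑ j ∈ s, ⟪f i ω, f j ω⟫ := fun ω => by
    rw [← real_inner_self_eq_norm_sq, sum_inner]
    simp only [inner_sum]
  simp_rw [hexpand]
  rw [integral_finsetSum _ fun i hi => integrable_finsetSum _ fun j hj =>
    (hf i hi).integrable_inner (hf j hj)]
  refine sum_congr rfl fun i hi => ?_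
  rw [integral_finsetSum _ fun j hj => (hf i hi).integrable_inner (hf j hj),
    sum_eq_single_of_mem i hi fun j hj hji => horth i hi j hj hji.symm]
  simp only [real_inner_self_eq_norm_sq]

variable [CompleteSpace H] [IsFiniteMeasure μ]

lemma integral_eq_zero_of_condExp_eq_zero {m : MeasurableSpace Ω} (hm : m ≤ m0) {Y : Ω → H}
    (hY0 : μ[Y|m] =ᵐ[μ] 0) : ∫ ω, Y ω ∂μ = 0 := by
  rw [← integral_condExp hm, integral_congr_ae hY0]
  simp

lemma integral_inner_eq_zero_of_condExp_eq_zero {m : MeasurableSpace Ω} (hm : m ≤ m0)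
    {X Y : Ω → H} (hX : MemLp X 2 μ) (hY : MemLp Y 2 μ)
    (hXm : AEStronglyMeasurable[m] X μ) (hY0 : μ[Y|m] =ᵐ[μ] 0) :
    ∫ ω, ⟪X ω, Y ω⟫ ∂μ = 0 := by
  have hcond : (condExpL2 H ℝ hm (hY.toLp Y) : Ω → H) =ᵐ[μ] 0 :=
    (hY.condExpL2_ae_eq_condExp hm).trans hY0
  calc ∫ ω, ⟪X ω, Y ω⟫ ∂μ = ⟪hY.toLp Y, hX.toLp X⟫ := by
        rw [L2.inner_def, integral_congr_ae (hY.inner_toLp_ae_eq hX)]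
        simp_rw [real_inner_comm (X _)]
    _ = ⟪(condExpL2 H ℝ hm (hY.toLp Y) : Lp H 2 μ), hX.toLp X⟫ :=
        (inner_condExpL2_eq_inner_fun hm _ _ (hXm.congr hX.coeFn_toLp.symm)).symm
    _ = 0 := by
        rw [L2.inner_def]
        refine integral_eq_zero_of_ae ?_
        filter_upwards [hcond] with ω hω
        simp [hω]

lemma integral_inner_eq_zero_of_indep {m₁ m₂ : MeasurableSpace Ω}
    (hm₁ : m₁ ≤ m0) (hm₂ : m₂ ≤ m0) (hindep : Indep m₁ m₂ μ) {X Y : Ω → H}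
    (hX : MemLp X 2 μ) (hY : MemLp Y 2 μ) (hXm : StronglyMeasurable[m₁] X)
    (hYm : StronglyMeasurable[m₂] Y) (hY0 : ∫ ω, Y ω ∂μ = 0) :
    ∫ ω, ⟪X ω, Y ω⟫ ∂μ = 0 :=
  integral_inner_eq_zero_of_condExp_eq_zero hm₁ hX hY hXm.aestronglyMeasurable
    ((condExp_indep_eq hm₂ hm₁ hYm hindep.symm).trans (by rw [hY0]; rfl))

lemma integral_inner_eq_zero_of_condExp_succ_eq_zero {ℱ : Filtration ℕ m0} {ξ : ℕ → Ω → H}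
    (hL2 : ∀ k, MemLp (ξ k) 2 μ) (hadap : StronglyAdapted ℱ ξ)
    (hmd : ∀ k, μ[ξ (k + 1)|ℱ k] =ᵐ[μ] 0) {k l : ℕ} (hkl : k ≤ l) :
    ∫ ω, ⟪ξ k ω, ξ (l + 1) ω⟫ ∂μ = 0 :=
  integral_inner_eq_zero_of_condExp_eq_zero (ℱ.le l) (hL2 k) (hL2 (l + 1))
    ((hadap k).mono (ℱ.mono hkl)).aestronglyMeasurable (hmd l)

end Orthogonality

section IndependentMartingaleDifferences

variable {Ω : Type*} {m0 : MeasurableSpace Ω} {H : Type*} [NormedAddCommGroup H]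
  [MeasurableSpace H] [BorelSpace H]

lemma stronglyMeasurable_iSup_comap [SecondCountableTopology H] (ξ : ℕ → Ω → H) (k : ℕ) :
    StronglyMeasurable[⨆ l, MeasurableSpace.comap (ξ l) inferInstance] (ξ k) :=
  ((comap_measurable (ξ k)).mono (le_iSup (fun l => MeasurableSpace.comap (ξ l) _) k)
    le_rfl).stronglyMeasurable

lemma iSup_comap_le_of_stronglyAdapted {ℱ : Filtration ℕ m0} {ξ : ℕ → Ω → H}
    (hadap : StronglyAdapted ℱ ξ) :
    (⨆ k, MeasurableSpace.comap (ξ k) inferInstance) ≤ m0 :=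
  iSup_le fun k => ((hadap k).mono (ℱ.le k)).measurable.comap_le

variable {μ : Measure Ω} [IsFiniteMeasure μ] [InnerProductSpace ℝ H] [CompleteSpace H]
  [SecondCountableTopology H] {ι : Type*} {ξ : ι → ℕ → Ω → H} {ℱ : ι → Filtration ℕ m0}

lemma integral_inner_sigma_eq_zero_of_ne
    (hL2 : ∀ i k, MemLp (ξ i k) 2 μ) (hadap : ∀ i, StronglyAdapted (ℱ i) (ξ i))
    (hmd : ∀ i k, μ[ξ i (k + 1)|ℱ i k] =ᵐ[μ] 0)
    (hindep : iIndep (fun i => ⨆ k, MeasurableSpace.comap (ξ i k) inferInstance) μ)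
    {q r : (_ : ι) × ℕ} (hqr : q ≠ r) :
    ∫ ω, ⟪ξ q.1 (q.2 + 1) ω, ξ r.1 (r.2 + 1) ω⟫ ∂μ = 0 := by
  obtain ⟨i, k⟩ := q
  obtain ⟨j, l⟩ := r
  rcases eq_or_ne i j with rfl | hij
  · have hkl : k ≠ l := fun h => hqr (by rw [h])
    rcases hkl.lt_or_gt with hkl | hlk
    · exact integral_inner_eq_zero_of_condExp_succ_eq_zero (hL2 i) (hadap i) (hmd i) hkl
    · refine (integral_congr_ae (.of_forall fun ω => real_inner_comm _ _)).trans ?_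
      exact integral_inner_eq_zero_of_condExp_succ_eq_zero (hL2 i) (hadap i) (hmd i) hlk
  · exact integral_inner_eq_zero_of_indep (iSup_comap_le_of_stronglyAdapted (hadap i))
      (iSup_comap_le_of_stronglyAdapted (hadap j)) (hindep.indep hij) (hL2 i _) (hL2 j _)
      (stronglyMeasurable_iSup_comap (ξ i) _) (stronglyMeasurable_iSup_comap (ξ j) _)
      (integral_eq_zero_of_condExp_eq_zero ((ℱ j).le l) (hmd j l))

end IndependentMartingaleDifferences

theorem stmt_13_general {Ω : Type*} {m0 : MeasurableSpace Ω} (μ : Measure Ω) [IsProbabilityMeasure μ]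
    {H : Type*} [NormedAddCommGroup H] [InnerProductSpace ℝ H] [CompleteSpace H]
    [MeasurableSpace H] [BorelSpace H] [SecondCountableTopology H]
    (L₁ C₁ α : ℝ) (hL₁ : 0 < L₁) (hC₁ : 0 < C₁) (hα0 : 0 < α) (hα1 : α < 1)
    (p : ℕ) (n : Fin p → ℕ)
    (ξ : Fin p → ℕ → Ω → H) (ℱ : Fin p → Filtration ℕ m0)
    (hL2 : ∀ i k, MemLp (ξ i k) 2 μ)
    (hadap : ∀ i k, StronglyMeasurable[(ℱ i) k] (ξ i k))
    (hmd : ∀ i, ∀ k : ℕ, 1 ≤ k → μ[ξ i k | (ℱ i) (k - 1)] =ᵐ[μ] 0)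
    (hindep : iIndep (fun i => ⨆ k, MeasurableSpace.comap (ξ i k) inferInstance) μ)
    (hbound : ∀ i k, ∫ ω, ‖ξ i (k + 1) ω‖ ^ 2 ∂μ ≤ L₁ * (1 + C₁ * (k : ℝ) ^ (-α))) :
    ∫ ω, ‖((∑ i, (n i : ℝ))⁻¹) • ∑ i, ∑ k ∈ Finset.Icc 1 (n i), ξ i (k + 1) ω‖ ^ 2 ∂μ
      ≤ L₁ / (∑ i, (n i : ℝ))
        + L₁ * C₁ * (1 - α)⁻¹ * (p : ℝ) ^ α * (∑ i, (n i : ℝ)) ^ (-(1 + α)) := by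
  set N : ℝ := ∑ i, (n i : ℝ)
  set T := (univ : Finset (Fin p)).sigma fun i => Icc 1 (n i)
  have hmd' : ∀ i k, μ[ξ i (k + 1) | ℱ i k] =ᵐ[μ] 0 := fun i k => by
    simpa using hmd i (k + 1) le_add_self
  have hsecond : ∫ ω, ‖∑ q ∈ T, ξ q.1 (q.2 + 1) ω‖ ^ 2 ∂μ
      ≤ L₁ * N + L₁ * C₁ * ((1 - α)⁻¹ * (p : ℝ) ^ α * N ^ (1 - α)) := by
    rw [integral_norm_sum_sq_of_orthogonal T (fun q _ => hL2 _ _)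
      fun q _ r _ hqr => integral_inner_sigma_eq_zero_of_ne hL2 hadap hmd' hindep hqr]
    calc ∑ q ∈ T, ∫ ω, ‖ξ q.1 (q.2 + 1) ω‖ ^ 2 ∂μ
        ≤ ∑ q ∈ T, L₁ * (1 + C₁ * (q.2 : ℝ) ^ (-α)) := sum_le_sum fun q _ => hbound _ _
      _ = L₁ * N + L₁ * C₁ * ∑ i, ∑ k ∈ Icc 1 (n i), (k : ℝ) ^ (-α) := by
        simp [T, N, sum_sigma, mul_add, sum_add_distrib, mul_sum, mul_assoc, mul_comm]
      _ ≤ _ := by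
        gcongr
        simpa using sum_sum_Icc_rpow_neg_le univ n hα0.le hα1
  have hN : 0 ≤ N := by positivity
  calc ∫ ω, ‖N⁻¹ • ∑ i, ∑ k ∈ Icc 1 (n i), ξ i (k + 1) ω‖ ^ 2 ∂μ
      = (N ^ 2)⁻¹ * ∫ ω, ‖∑ q ∈ T, ξ q.1 (q.2 + 1) ω‖ ^ 2 ∂μ := by
        simp_rw [T, sum_sigma, norm_smul, mul_pow, Real.norm_eq_abs, sq_abs, inv_pow,
          integral_const_mul]
    _ ≤ (N ^ 2)⁻¹ * (L₁ * N + L₁ * C₁ * ((1 - α)⁻¹ * (p : ℝ) ^ α * N ^ (1 - α))) := by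
        gcongr
    _ = _ := by
        have hpow : (N ^ 2)⁻¹ * N ^ (1 - α) = N ^ (-(1 + α)) := by
          rw [← Real.rpow_natCast, ← Real.rpow_neg hN,
            ← Real.rpow_add' hN (by norm_num; linarith)]
          ring_nf
        rw [mul_add, ← hpow]
        field_simp

theorem stmt_13 {Ω : Type*} {m0 : MeasurableSpace Ω} (μ : Measure Ω) [IsProbabilityMeasure μ]
    {H : Type*} [NormedAddCommGroup H] [InnerProductSpace ℝ H] [CompleteSpace H]
    [MeasurableSpace H] [BorelSpace H] [SecondCountableTopology H]
    (L₁ C₁ α : ℝ) (hL₁ : 0 < L₁) (hC₁ : 0 < C₁) (hα0 : 0 < α) (hα1 : α < 1)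
    (p : ℕ) (hp : 1 ≤ p) (n : Fin p → ℕ) (hn : ∀ i, 1 ≤ n i)
    (ξ : Fin p → ℕ → Ω → H) (ℱ : Fin p → Filtration ℕ m0)
    (hL2 : ∀ i k, MemLp (ξ i k) 2 μ)
    (hadap : ∀ i k, StronglyMeasurable[(ℱ i) k] (ξ i k))
    (hmd : ∀ i, ∀ k : ℕ, 1 ≤ k → μ[ξ i k | (ℱ i) (k - 1)] =ᵐ[μ] 0)
    (hindep : iIndep (fun i => ⨆ k, MeasurableSpace.comap (ξ i k) inferInstance) μ)
    (hbound : ∀ i k, ∫ ω, ‖ξ i (k + 1) ω‖ ^ 2 ∂μ ≤ L₁ * (1 + C₁ * (k : ℝ) ^ (-α))) :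
    ∫ ω, ‖((∑ i, (n i : ℝ))⁻¹) • ∑ i, ∑ k ∈ Finset.Icc 1 (n i), ξ i (k + 1) ω‖ ^ 2 ∂μ
      ≤ L₁ / (∑ i, (n i : ℝ))
        + L₁ * C₁ * (1 - α)⁻¹ * (p : ℝ) ^ α * (∑ i, (n i : ℝ)) ^ (-(1 + α)) :=
  stmt_13_general μ L₁ C₁ α hL₁ hC₁ hα0 hα1 p n ξ ℱ hL2 hadap hmd hindep hbound
end
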